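/- Let ψ be a formal power series with ψ(0) ≠ 0 and let g with g(0)=0 satisfy g(z) = zψ(g(z)). Then for any formal power series H and all n ≥ 1, the n-th coefficient of H(g(z)) equals (1/n) times the (n−1)-th coefficient of H'(z)·ψ(z)^n. -/

import Mathlib

open PowerSeries

/-- Composition H(g) of formal power series, valid when g has zero constant term. -/
noncomputable def psComp {K : Type*} [CommRing K] (H g : PowerSeries K) : PowerSeries K :=
  PowerSeries.mk fun n => ∑ k ∈ Finset.range (n + 1),
    (PowerSeries.coeff k H) * (PowerSeries.coeff n (g ^ k))

/-!
The series `f = X / ψ` satisfies `f(g) = g / ψ(g) = X`, so it is the compositional inverse of `g`,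
and `H = c(f) = ∑ cₘ fᵐ` with `c = H(g)`. The functional `F ↦ [Xⁿ] (X F' ψⁿ)` only sees `F` modulo
`Xⁿ⁺¹`, and on `fᵐ` with `m ≤ n` it takes the value `n` if `m = n` and `0` otherwise: for `m < n`
and `j = n - m`, `X (fᵐ)' ψⁿ = m Xᵐ (ψʲ - X ψʲ⁻¹ ψ')`, and `j · [Xʲ] (X ψʲ⁻¹ ψ') = [Xʲ] (X (ψʲ)')`
`= j · [Xʲ] ψʲ`. Hence `[Xⁿ⁻¹] (H' ψⁿ) = n cₙ`.
-/

open Finset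

section CommRing

variable {R : Type*} [CommRing R]

theorem coeff_pow_eq_zero_of_lt {g : R⟦X⟧} (hg : constantCoeff g = 0) {n d : ℕ} (h : n < d) :
    coeff n (g ^ d) = 0 :=
  X_pow_dvd_iff.mp (pow_dvd_pow_of_dvd (X_dvd_iff.mpr hg) d) n h

theorem psComp_eq_subst {g : R⟦X⟧} (hg : constantCoeff g = 0) (H : R⟦X⟧) :
    psComp H g = H.subst g := by
  ext n
  rw [psComp, coeff_mk, coeff_subst' (HasSubst.of_constantCoeff_zero' hg)]
  refine (finsum_eq_sum_of_support_subset _ fun d hd => ?_).symm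
  rw [coe_range, Set.mem_Iio, Nat.lt_succ_iff]
  by_contra! h
  exact hd (by simp only [coeff_pow_eq_zero_of_lt hg h, mul_zero])

theorem X_pow_dvd_subst {f F : R⟦X⟧} (hf : constantCoeff f = 0) {n : ℕ} (h : X ^ n ∣ F) :
    X ^ n ∣ F.subst f := by
  obtain ⟨G, rfl⟩ := h
  have hf' := HasSubst.of_constantCoeff_zero' hf
  rw [subst_mul hf', subst_pow hf', subst_X hf']
  exact (pow_dvd_pow_of_dvd (X_dvd_iff.mpr hf) n).mul_right _

theorem X_pow_dvd_subst_sub_sum_range {f : R⟦X⟧} (hf : constantCoeff f = 0) (c : R⟦X⟧)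
    (n : ℕ) :
    X ^ n ∣ c.subst f - ∑ m ∈ range n, coeff m c • f ^ m := by
  have hf' := HasSubst.of_constantCoeff_zero' hf
  have htrunc : X ^ n ∣ c - (trunc n c : R⟦X⟧) :=
    X_pow_dvd_iff.mpr fun m hm => by
      rw [map_sub, Polynomial.coeff_coe, coeff_trunc, if_pos hm, sub_self]
  convert X_pow_dvd_subst hf htrunc using 1
  rw [subst_sub hf', subst_coe hf', Polynomial.aeval_def, eval₂_trunc_eq_sum_range]
  simp [smul_eq_C_mul]

theorem coeff_X_mul_derivative (F : R⟦X⟧) (k : ℕ) :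
    coeff k (X * d⁄dX R F) = k * coeff k F := by
  cases k with
  | zero => simp
  | succ k => rw [coeff_succ_X_mul, coeff_derivative, mul_comm, Nat.cast_succ]

theorem X_pow_dvd_X_mul_derivative {F : R⟦X⟧} {n : ℕ} (h : X ^ n ∣ F) :
    X ^ n ∣ X * d⁄dX R F :=
  X_pow_dvd_iff.mpr fun m hm => by
    rw [coeff_X_mul_derivative, X_pow_dvd_iff.mp h m hm, mul_zero]

theorem subst_eq_X_of_subst_eq_X {f g : R⟦X⟧} (hf : constantCoeff f = 0)
    (hg : constantCoeff g = 0) (hf₁ : IsUnit (coeff 1 f)) (hfg : f.subst g = X) :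
    g.subst f = X := by
  have hQg : f.substInvOfIsUnit hf₁ = g := calc
    _ = (f.substInvOfIsUnit hf₁).subst (f.subst g) := by rw [hfg, X_subst]
    _ = subst g ((f.substInvOfIsUnit hf₁).subst f) := by
      rw [subst_comp_subst_apply (.of_constantCoeff_zero' hf) (.of_constantCoeff_zero' hg)]
    _ = g := by rw [subst_substInvOfIsUnit_left f hf hf₁, subst_X (.of_constantCoeff_zero' hg)]
  rw [← hQg, subst_substInvOfIsUnit_left f hf hf₁]

end CommRing

theorem coeff_succ_X_mul_pow_mul_derivative {R : Type*} [CommRing R] [IsAddTorsionFree R]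
    (ψ : R⟦X⟧) (k : ℕ) :
    coeff (k + 1) (X * (ψ ^ k * d⁄dX R ψ)) = coeff (k + 1) (ψ ^ (k + 1)) := by
  have hderiv : d⁄dX R (ψ ^ (k + 1)) = (k + 1) • (ψ ^ k * d⁄dX R ψ) := by
    rw [derivative_pow, Nat.add_sub_cancel, nsmul_eq_mul, mul_assoc, Nat.cast_succ]
  refine nsmul_right_injective k.succ_ne_zero ?_
  dsimp only
  rw [← map_nsmul, ← mul_smul_comm, ← hderiv, coeff_X_mul_derivative, nsmul_eq_mul,
    Nat.cast_succ]

section Field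

variable {K : Type*} [Field K] {ψ : K⟦X⟧}

theorem X_mul_derivative_pow_mul_pow (hψ : constantCoeff ψ ≠ 0) (m : ℕ) :
    X * d⁄dX K ((X * ψ⁻¹) ^ m) * ψ ^ m = m • (X ^ m * (1 - X * (ψ⁻¹ * d⁄dX K ψ))) := by
  cases m with
  | zero => simp
  | succ m =>
    rw [derivative_pow, Derivation.leibniz, derivative_X, derivative_inv', Nat.add_sub_cancel]
    calc _ = (m + 1) • (X ^ (m + 1) * (1 - X * (ψ⁻¹ * d⁄dX K ψ))) * (ψ⁻¹ * ψ) ^ (m + 1) := by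
          simp only [smul_eq_mul, nsmul_eq_mul]
          push_cast
          ring
      _ = _ := by rw [PowerSeries.inv_mul_cancel ψ hψ, one_pow, mul_one]

theorem coeff_X_mul_derivative_pow_mul_pow [CharZero K] (hψ : constantCoeff ψ ≠ 0) {m n : ℕ}
    (hmn : m ≤ n) :
    coeff n (X * d⁄dX K ((X * ψ⁻¹) ^ m) * ψ ^ n) = if m = n then (n : K) else 0 := by
  obtain ⟨j, rfl⟩ := Nat.exists_eq_add_of_le hmn
  rw [pow_add, ← mul_assoc, X_mul_derivative_pow_mul_pow hψ, smul_mul_assoc, map_nsmul,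
    mul_assoc, add_comm m j, coeff_X_pow_mul, nsmul_eq_mul]
  cases j with
  | zero => simp
  | succ k =>
    have hcancel : ψ⁻¹ * d⁄dX K ψ * ψ ^ (k + 1) = ψ ^ k * d⁄dX K ψ := by
      rw [← mul_one (ψ ^ k * _), ← PowerSeries.inv_mul_cancel ψ hψ]
      ring
    rw [if_neg (by omega), sub_mul, one_mul, mul_assoc, hcancel, map_sub,
      coeff_succ_X_mul_pow_mul_derivative, sub_self, mul_zero]

theorem subst_X_mul_inv_eq_X (hψ : constantCoeff ψ ≠ 0) {g : K⟦X⟧} (hg : constantCoeff g = 0)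
    (hlag : g = X * ψ.subst g) :
    (X * ψ⁻¹).subst g = X := by
  have hg' := HasSubst.of_constantCoeff_zero' hg
  calc (X * ψ⁻¹).subst g = X * (ψ * ψ⁻¹).subst g := by
        rw [subst_mul hg', subst_X hg', subst_mul hg', ← mul_assoc, ← hlag]
    _ = X := by rw [PowerSeries.mul_inv_cancel ψ hψ, ← coe_substAlgHom hg', map_one, mul_one]

theorem subst_X_mul_inv_subst (hψ : constantCoeff ψ ≠ 0) {g : K⟦X⟧} (hg : constantCoeff g = 0)
    (hlag : g = X * ψ.subst g) (H : K⟦X⟧) :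
    subst (X * ψ⁻¹) (H.subst g) = H := by
  have hf₀ : constantCoeff (X * ψ⁻¹ : K⟦X⟧) = 0 := by simp
  have hf₁ : IsUnit (coeff 1 (X * ψ⁻¹ : K⟦X⟧)) := by
    rw [coeff_succ_X_mul, coeff_zero_eq_constantCoeff_apply, constantCoeff_inv]
    exact (inv_ne_zero hψ).isUnit
  rw [subst_comp_subst_apply (.of_constantCoeff_zero' hg) (.of_constantCoeff_zero' hf₀),
    subst_eq_X_of_subst_eq_X hf₀ hg hf₁ (subst_X_mul_inv_eq_X hψ hg hlag), X_subst]

theorem coeff_X_mul_derivative_subst_mul_pow [CharZero K] (hψ : constantCoeff ψ ≠ 0)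
    (c : K⟦X⟧) (n : ℕ) :
    coeff n (X * d⁄dX K (c.subst (X * ψ⁻¹)) * ψ ^ n) = n * coeff n c := by
  have hf : constantCoeff (X * ψ⁻¹ : K⟦X⟧) = 0 := by simp
  obtain ⟨r, hr⟩ := X_pow_dvd_subst_sub_sum_range hf c (n + 1)
  have hremainder : coeff n (X * d⁄dX K (X ^ (n + 1) * r) * ψ ^ n) = 0 := by
    obtain ⟨s, hs⟩ := X_pow_dvd_X_mul_derivative (dvd_mul_right (X ^ (n + 1)) r)
    rw [hs, mul_assoc, coeff_X_pow_mul', if_neg (by omega)]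
  rw [← sub_add_cancel (c.subst _) (∑ m ∈ range (n + 1), _), hr, add_comm, map_add, mul_add,
    add_mul, map_add, hremainder, add_zero, map_sum, mul_sum, sum_mul, map_sum]
  simp_rw [Derivation.map_smul, mul_smul_comm, smul_mul_assoc, LinearMap.map_smul, smul_eq_mul]
  rw [sum_congr rfl fun m hm => by
    rw [coeff_X_mul_derivative_pow_mul_pow hψ (Nat.lt_succ_iff.mp (mem_range.mp hm))]]
  rw [sum_eq_single_of_mem n (self_mem_range_succ n) fun m _ hmn => by
    rw [if_neg hmn, mul_zero], if_pos rfl, mul_comm]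

end Field

/-- Lagrange inversion for compositions: if g(0)=0 solves g = z·ψ(g)
with ψ(0) ≠ 0, then for any formal power series H and n ≥ 1,
coeff_n(H(g)) = (1/n)·coeff_{n−1}(H'·ψ^n). -/
theorem stmt_3 {K : Type*} [Field K] [CharZero K] (ψ g : PowerSeries K)
    (hg0 : PowerSeries.constantCoeff g = 0)
    (hψ0 : PowerSeries.constantCoeff ψ ≠ 0)
    (hlag : g = PowerSeries.X * psComp ψ g) :
    ∀ H : PowerSeries K, ∀ n : ℕ, 1 ≤ n →
      PowerSeries.coeff n (psComp H g) =
        (1 / (n : K)) * PowerSeries.coeff (n - 1) (H.derivativeFun * ψ ^ n) := by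
  intro H n hn
  obtain ⟨k, rfl⟩ : ∃ k, n = k + 1 := Nat.exists_eq_add_of_le' hn
  have hres := coeff_X_mul_derivative_subst_mul_pow hψ0 (H.subst g) (k + 1)
  rw [subst_X_mul_inv_subst hψ0 hg0 (by rwa [← psComp_eq_subst hg0]), mul_assoc,
    coeff_succ_X_mul] at hres
  rw [psComp_eq_subst hg0, Nat.add_sub_cancel]
  change _ = _ * coeff k (d⁄dX K H * ψ ^ (k + 1))
  rw [hres]
  field_simp
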